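/- Let K̂ be a simplicial complex on a vertex set of size n̂ with dimension d−1 (d ≥ 1), and suppose V(K̂) = V ∪ V' where K := K̂[V] and K' := K̂[V'] are induced subcomplexes such that every face of K̂ is a face of K or a face of K'. Suppose K and K' each satisfy the Taylor upper bound. Let t = M̃_{n̂−d}(K̂) − (n̂−d) − 1 (this is a nonnegative integer). If |V ∩ V'| ≤ t + d − 1, then K̂ satisfies the Taylor upper bound. -/

import Mathlib

open Finset

/-- A simplicial complex on a finite vertex set: a collection of finite subsets
(faces) of the vertex set, closed under inclusion, containing every singleton. -/
structure SC (α : Type*) [DecidableEq α] where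
  verts : Finset α
  faces : Finset (Finset α)
  subset_verts : ∀ F ∈ faces, F ⊆ verts
  down_closed : ∀ F ∈ faces, ∀ G, G ⊆ F → G ∈ faces
  singleton_mem : ∀ v ∈ verts, {v} ∈ faces

namespace SC

variable {α : Type*} [DecidableEq α]

/-- `dimP1 K = dim K + 1`: the maximal number of vertices of a face. -/
def dimP1 (K : SC α) : ℕ := K.faces.sup Finset.card

/-- The number of faces with exactly `j` vertices, i.e. `f_{j-1}(K)`. -/
def fCard (K : SC α) (j : ℕ) : ℕ := (K.faces.filter (fun F => F.card = j)).card

/-- The minimal non-faces of `K`: subsets of the vertex set which are not faces,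
all of whose proper subsets are faces. -/
def minNonFaces (K : SC α) : Finset (Finset α) :=
  K.verts.powerset.filter (fun F => F ∉ K.faces ∧ ∀ G ∈ F.powerset, G ≠ F → G ∈ K.faces)

/-- The `i`-th minimal Taylor shift `m̃_i(K)`: the minimal number of vertices covered by
a set of exactly `i` minimal non-faces of `K`. -/
noncomputable def mT (K : SC α) (i : ℕ) : ℕ :=
  sInf {n | ∃ T ⊆ K.minNonFaces, T.card = i ∧ (T.sup id).card = n}

/-- The `i`-th maximal Taylor shift `M̃_i(K)`: the maximal number of vertices covered by
a set of exactly `i` minimal non-faces of `K`. -/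
noncomputable def MT (K : SC α) (i : ℕ) : ℕ :=
  sSup {n | ∃ T ⊆ K.minNonFaces, T.card = i ∧ (T.sup id).card = n}

/-- The conjectured Taylor upper bound `(∏_{i=1}^{n-d} M̃_i(K))/(n-d)!` on `f_{d-1}(K)`. -/
noncomputable def taylorUBval (K : SC α) : ℚ :=
  (∏ i ∈ Finset.Icc 1 (K.verts.card - K.dimP1), (K.MT i : ℚ)) /
    (Nat.factorial (K.verts.card - K.dimP1))

/-- The conjectured Taylor lower bound `(∏_{i=1}^{n-d} m̃_i(K))/(n-d)!` on `f_{d-1}(K)`. -/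
noncomputable def taylorLBval (K : SC α) : ℚ :=
  (∏ i ∈ Finset.Icc 1 (K.verts.card - K.dimP1), (K.mT i : ℚ)) /
    (Nat.factorial (K.verts.card - K.dimP1))

/-- `K` satisfies the Taylor upper bound: `f_{d-1}(K) ≤ (∏_{i=1}^{n-d} M̃_i(K))/(n-d)!`. -/
def TaylorUB (K : SC α) : Prop := (K.fCard K.dimP1 : ℚ) ≤ K.taylorUBval

/-- `K` satisfies the Taylor lower bound: `f_{d-1}(K) ≥ (∏_{i=1}^{n-d} m̃_i(K))/(n-d)!`. -/
def TaylorLB (K : SC α) : Prop := K.taylorLBval ≤ (K.fCard K.dimP1 : ℚ)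

/-- The induced subcomplex `K[W]`: the faces of `K` contained in `W`. -/
def induced (K : SC α) (W : Finset α) : SC α where
  verts := K.verts ∩ W
  faces := K.faces.filter (fun F => F ⊆ W)
  subset_verts := by
    intro F hF
    simp only [mem_filter] at hF
    exact subset_inter (K.subset_verts F hF.1) hF.2
  down_closed := by
    intro F hF G hG
    simp only [mem_filter] at hF ⊢
    exact ⟨K.down_closed F hF.1 G hG, hG.trans hF.2⟩
  singleton_mem := by
    intro v hv
    simp only [mem_inter] at hv
    simp only [mem_filter, singleton_subset_iff]
    exact ⟨K.singleton_mem v hv.1, hv.2⟩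

end SC


/-!
Write `n = |V(K̂)|`, `s = n - d` and `a_W = |W| - d`. For a proper induced subcomplex `K̂[W]`,
its Taylor bound, `M̃_i(K̂[W]) ≤ M̃_i(K̂)` and `M̃_i(K̂) ≥ i + 1` give
`f_{d-1}(K̂[W]) · M̃_s(K̂) ≤ (a_W + 1) · (∏_{i ≤ s} M̃_i(K̂)) / s!`.
Every facet of `K̂` is a facet of `K̂[V]` or of `K̂[V']`, so adding the two bounds gives the Taylor
bound of `K̂` once `a_V + a_V' + 2 ≤ M̃_s(K̂) = s + t + 1`, and this is what `|V ∩ V'| ≤ t + d - 1`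
guarantees.
-/

open Nat in
theorem prod_Icc_div_factorial_succ_le {M : ℕ → ℕ} {a s : ℕ} (has : a ≤ s)
    (hM : ∀ i, a < i → i ≤ s → i + 1 ≤ M i) :
    (∏ i ∈ Icc 1 a, (M i : ℚ)) / (a + 1)! ≤ (∏ i ∈ Icc 1 s, (M i : ℚ)) / (s + 1)! := by
  induction s, has using Nat.le_induction with
  | base => exact le_rfl
  | succ s has ih =>
    have hMs : ((s + 2 : ℕ) : ℚ) ≤ M (s + 1) := by exact_mod_cast hM (s + 1) (by omega) le_rfl
    calc (∏ i ∈ Icc 1 a, (M i : ℚ)) / (a + 1)!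
        ≤ (∏ i ∈ Icc 1 s, (M i : ℚ)) / (s + 1)! :=
          ih fun i hai his => hM i hai (by omega)
      _ = (∏ i ∈ Icc 1 s, (M i : ℚ)) / (s + 1)! * ((s + 2 : ℕ) / (s + 2 : ℕ)) := by
          rw [div_self (by positivity), mul_one]
      _ ≤ (∏ i ∈ Icc 1 s, (M i : ℚ)) / (s + 1)! * (M (s + 1) / (s + 2 : ℕ)) := by gcongr
      _ = (∏ i ∈ Icc 1 (s + 1), (M i : ℚ)) / (s + 1 + 1)! := by
          rw [prod_Icc_succ_top (by omega), factorial_succ (s + 1)]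
          push_cast
          field_simp
          ring

namespace SC

variable {α : Type*} [DecidableEq α]

section MinNonFaces

variable {K : SC α}

theorem mem_minNonFaces {F : Finset α} :
    F ∈ K.minNonFaces ↔ F ⊆ K.verts ∧ F ∉ K.faces ∧ ∀ G ∈ F.powerset, G ≠ F → G ∈ K.faces := by
  simp only [minNonFaces, mem_filter, mem_powerset]

theorem exists_minNonFaces_subset {F : Finset α} (hF : F ⊆ K.verts) (hnF : F ∉ K.faces) :
    ∃ N ∈ K.minNonFaces, N ⊆ F := by
  obtain ⟨N, hN⟩ := Finset.exists_minimal (s := F.powerset.filter (· ∉ K.faces))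
    ⟨F, mem_filter.mpr ⟨mem_powerset_self F, hnF⟩⟩
  have hNF : N ⊆ F := mem_powerset.mp (mem_filter.mp hN.prop).1
  refine ⟨N, mem_minNonFaces.mpr ⟨hNF.trans hF, (mem_filter.mp hN.prop).2, ?_⟩, hNF⟩
  intro G hG hGN
  by_contra hGnF
  have hGN' : G ⊆ N := mem_powerset.mp hG
  exact hGN (subset_antisymm hGN'
    (hN.2 (mem_filter.mpr ⟨mem_powerset.mpr (hGN'.trans hNF), hGnF⟩) hGN'))

theorem exists_ne_of_mem_minNonFaces {N : Finset α} (hN : N ∈ K.minNonFaces) {v : α}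
    (hv : v ∈ N) : ∃ u ∈ N, u ≠ v := by
  by_contra! h
  have hNv : N = {v} := subset_antisymm (fun u hu => mem_singleton.mpr (h u hu))
    (singleton_subset_iff.mpr hv)
  obtain ⟨hNV, hnN, -⟩ := mem_minNonFaces.mp hN
  exact hnN (hNv ▸ K.singleton_mem v (hNV hv))

theorem minNonFaces_induced_subset (W : Finset α) :
    (K.induced W).minNonFaces ⊆ K.minNonFaces := by
  intro F hF
  obtain ⟨hFV, hnF, hmin⟩ := mem_minNonFaces.mp hF
  refine mem_minNonFaces.mpr ⟨hFV.trans inter_subset_left, fun hF' => hnF ?_,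
    fun G hG hGF => (mem_filter.mp (hmin G hG hGF)).1⟩
  exact mem_filter.mpr ⟨hF', hFV.trans inter_subset_right⟩

end MinNonFaces

section Dimension

variable {K : SC α}

theorem exists_mem_faces_card_eq_dimP1 (h : K.verts.Nonempty) :
    ∃ F ∈ K.faces, F.card = K.dimP1 := by
  obtain ⟨v, hv⟩ := h
  obtain ⟨F, hF, hFsup⟩ := exists_mem_eq_sup _ ⟨_, K.singleton_mem v hv⟩ Finset.card
  exact ⟨F, hF, hFsup.symm⟩

theorem dimP1_le_card_verts : K.dimP1 ≤ K.verts.card :=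
  Finset.sup_le fun F hF => card_le_card (K.subset_verts F hF)

theorem dimP1_induced_le (W : Finset α) : (K.induced W).dimP1 ≤ K.dimP1 :=
  sup_mono (filter_subset _ _)

theorem fCard_eq_zero_of_dimP1_lt {j : ℕ} (h : K.dimP1 < j) : K.fCard j = 0 := by
  rw [fCard, card_eq_zero, filter_eq_empty_iff]
  intro F hF hFj
  have hle : F.card ≤ K.dimP1 := le_sup hF
  omega

theorem exists_minNonFaces_mem_subset_insert {F : Finset α} (hF : F ∈ K.faces)
    (hFcard : F.card = K.dimP1) {v : α} (hv : v ∈ K.verts \ F) :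
    ∃ N ∈ K.minNonFaces, N ⊆ insert v F ∧ v ∈ N := by
  obtain ⟨hvV, hvF⟩ := mem_sdiff.mp hv
  have hnF : insert v F ∉ K.faces := fun h => by
    have hle : (insert v F).card ≤ K.dimP1 := le_sup h
    rw [card_insert_of_notMem hvF] at hle
    omega
  obtain ⟨N, hN, hNsub⟩ :=
    exists_minNonFaces_subset (insert_subset hvV (K.subset_verts F hF)) hnF
  refine ⟨N, hN, hNsub, by_contra fun hvN => (mem_minNonFaces.mp hN).2.1 ?_⟩
  exact K.down_closed F hF N fun x hx => (mem_insert.mp (hNsub hx)).resolve_left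
    (fun hxv => hvN (hxv ▸ hx))

end Dimension

section TaylorShifts

variable (K : SC α)

theorem bddAbove_MT_set (i : ℕ) :
    BddAbove {n | ∃ T ⊆ K.minNonFaces, T.card = i ∧ (T.sup id).card = n} := by
  refine ⟨K.verts.card, ?_⟩
  rintro n ⟨T, hT, -, rfl⟩
  exact card_le_card (Finset.sup_le fun N hN => (mem_minNonFaces.mp (hT hN)).1)

theorem card_sup_le_MT {T : Finset (Finset α)} (hT : T ⊆ K.minNonFaces) :
    (T.sup id).card ≤ K.MT T.card :=
  le_csSup (K.bddAbove_MT_set T.card) ⟨T, hT, rfl, rfl⟩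

theorem MT_zero : K.MT 0 = 0 := by
  refine Nat.eq_zero_of_le_zero (csSup_le' ?_)
  rintro n ⟨T, -, hT, rfl⟩
  simp [card_eq_zero.mp hT]

theorem MT_induced_le (W : Finset α) (i : ℕ) : (K.induced W).MT i ≤ K.MT i := by
  refine csSup_le_csSup' (K.bddAbove_MT_set i) ?_
  rintro n ⟨T, hT, hTi, rfl⟩
  exact ⟨T, hT.trans (K.minNonFaces_induced_subset W), hTi, rfl⟩

/-- Fix a face `F` of maximal size and `i` vertices `v ∉ F`; the minimal non-faces
`N_v ⊆ insert v F` through them are distinct, and their union also meets `F`. -/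
theorem succ_le_MT {i : ℕ} (hi : 1 ≤ i) (hin : i ≤ K.verts.card - K.dimP1) :
    i + 1 ≤ K.MT i := by
  obtain ⟨F, hF, hFcard⟩ := exists_mem_faces_card_eq_dimP1 (K := K) (card_pos.mp (by omega))
  obtain ⟨W, hW, hWcard⟩ : ∃ W ⊆ K.verts \ F, W.card = i :=
    exists_subset_card_eq (by rw [card_sdiff_of_subset (K.subset_verts F hF)]; omega)
  choose! N hN hNsub hvN using fun v (hv : v ∈ K.verts \ F) =>
    exists_minNonFaces_mem_subset_insert hF hFcard hv
  have hNinj : Set.InjOn N W := by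
    intro v hv w hw hvw
    have hwF : w ∉ F := (mem_sdiff.mp (hW hw)).2
    have hw' : w ∈ insert v F := hNsub v (hW hv) (hvw ▸ hvN w (hW hw))
    exact ((mem_insert.mp hw').resolve_right hwF).symm
  obtain ⟨v₀, hv₀⟩ : W.Nonempty := card_pos.mp (by omega)
  obtain ⟨u, hu, huv₀⟩ := exists_ne_of_mem_minNonFaces (hN v₀ (hW hv₀)) (hvN v₀ (hW hv₀))
  have huF : u ∈ F := (mem_insert.mp (hNsub v₀ (hW hv₀) hu)).resolve_left huv₀
  have huW : u ∉ W := fun h => (mem_sdiff.mp (hW h)).2 huF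
  have hsub : insert u W ⊆ (W.image N).sup id := by
    have hle : ∀ v ∈ W, N v ⊆ (W.image N).sup id := fun v hv =>
      le_sup (f := id) (mem_image_of_mem N hv)
    exact insert_subset (hle v₀ hv₀ hu) fun v hv => hle v hv (hvN v (hW hv))
  calc i + 1 = (insert u W).card := by rw [card_insert_of_notMem huW, hWcard]
    _ ≤ ((W.image N).sup id).card := card_le_card hsub
    _ ≤ K.MT (W.image N).card := K.card_sup_le_MT fun M hM => by
        obtain ⟨v, hv, rfl⟩ := mem_image.mp hM
        exact hN v (hW hv)
    _ = K.MT i := by rw [card_image_of_injOn hNinj, hWcard]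

end TaylorShifts

variable (K : SC α)

theorem taylorUBval_nonneg : 0 ≤ K.taylorUBval := by
  unfold taylorUBval
  positivity

theorem fCard_induced_mul_MT_le (W : Finset α)
    (hW : (K.induced W).verts.card < K.verts.card) (hUB : TaylorUB (K.induced W)) :
    ((K.induced W).fCard K.dimP1 : ℚ) * K.MT (K.verts.card - K.dimP1) ≤
      K.taylorUBval * ((K.induced W).verts.card - K.dimP1 + 1 : ℕ) := by
  set L := K.induced W
  rcases (K.dimP1_induced_le W).lt_or_eq with hlt | heq
  · rw [fCard_eq_zero_of_dimP1_lt hlt, Nat.cast_zero, zero_mul]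
    exact mul_nonneg K.taylorUBval_nonneg (Nat.cast_nonneg _)
  have hdL : K.dimP1 ≤ L.verts.card := heq ▸ dimP1_le_card_verts
  set a := L.verts.card - K.dimP1
  obtain ⟨s, hs⟩ : ∃ s, K.verts.card - K.dimP1 = s + 1 := ⟨K.verts.card - K.dimP1 - 1, by omega⟩
  have hfL : (L.fCard K.dimP1 : ℚ) ≤ (∏ i ∈ Icc 1 a, (K.MT i : ℚ)) / a.factorial := by
    rw [TaylorUB, taylorUBval, heq] at hUB
    refine hUB.trans (div_le_div_of_nonneg_right ?_ (Nat.cast_nonneg _))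
    exact prod_le_prod (fun _ _ => Nat.cast_nonneg _)
      fun i _ => Nat.cast_le.mpr (K.MT_induced_le W i)
  have hmono := prod_Icc_div_factorial_succ_le (M := K.MT) (a := a) (s := s) (by omega)
    fun i hai his => K.succ_le_MT (by omega) (by omega)
  have hMpos : (0 : ℚ) ≤ K.MT (s + 1) := Nat.cast_nonneg _
  rw [taylorUBval, hs, prod_Icc_succ_top (by omega)]
  calc (L.fCard K.dimP1 : ℚ) * K.MT (s + 1)
      ≤ (∏ i ∈ Icc 1 a, (K.MT i : ℚ)) / a.factorial * K.MT (s + 1) :=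
        mul_le_mul_of_nonneg_right hfL hMpos
    _ = (∏ i ∈ Icc 1 a, (K.MT i : ℚ)) / (a + 1).factorial * K.MT (s + 1) * (a + 1 : ℕ) := by
        rw [Nat.factorial_succ]
        push_cast
        field_simp
    _ ≤ (∏ i ∈ Icc 1 s, (K.MT i : ℚ)) / (s + 1).factorial * K.MT (s + 1) * (a + 1 : ℕ) := by
        gcongr
    _ = (∏ i ∈ Icc 1 s, (K.MT i : ℚ)) * K.MT (s + 1) / (s + 1).factorial * (a + 1 : ℕ) := by
        ring

theorem induced_eq_self {W : Finset α} (h : K.verts ⊆ W) : K.induced W = K := by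
  obtain ⟨verts, faces, hsub, _, _⟩ := K
  simp only [induced, mk.injEq]
  exact ⟨inter_eq_left.mpr h, filter_true_of_mem fun F hF => (hsub F hF).trans h⟩

theorem card_verts_induced_lt {W : Finset α} (h : ¬K.verts ⊆ W) :
    (K.induced W).verts.card < K.verts.card :=
  card_lt_card (inter_subset_left.ssubset_of_not_subset fun h' => h (h'.trans inter_subset_right))

theorem fCard_le_fCard_induced_add {V V' : Finset α}
    (hcover : ∀ F ∈ K.faces, F ⊆ V ∨ F ⊆ V') (j : ℕ) :
    K.fCard j ≤ (K.induced V).fCard j + (K.induced V').fCard j := by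
  refine (card_le_card fun F hF => ?_).trans (card_union_le _ _)
  obtain ⟨hFK, hFj⟩ := mem_filter.mp hF
  simp only [induced, mem_union, mem_filter]
  have := hcover F hFK
  tauto

theorem taylorUB_of_faces_cover {V V' : Finset α} (hcover : ∀ F ∈ K.faces, F ⊆ V ∨ F ⊆ V')
    (hKV : ¬K.verts ⊆ V) (hKV' : ¬K.verts ⊆ V')
    (hK : TaylorUB (K.induced V)) (hK' : TaylorUB (K.induced V'))
    (hcoef : ((K.induced V).verts.card - K.dimP1 + 1) + ((K.induced V').verts.card - K.dimP1 + 1) ≤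
      K.MT (K.verts.card - K.dimP1)) :
    TaylorUB K := by
  have hM : (0 : ℚ) < K.MT (K.verts.card - K.dimP1) := by exact_mod_cast (by omega)
  refine le_of_mul_le_mul_right ?_ hM
  calc (K.fCard K.dimP1 : ℚ) * K.MT (K.verts.card - K.dimP1)
      ≤ ((K.induced V).fCard K.dimP1 + (K.induced V').fCard K.dimP1 : ℕ) *
          K.MT (K.verts.card - K.dimP1) := by
        gcongr
        exact K.fCard_le_fCard_induced_add hcover _
    _ ≤ K.taylorUBval * ((K.induced V).verts.card - K.dimP1 + 1 : ℕ) +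
        K.taylorUBval * ((K.induced V').verts.card - K.dimP1 + 1 : ℕ) := by
        rw [Nat.cast_add, add_mul]
        exact add_le_add (K.fCard_induced_mul_MT_le V (K.card_verts_induced_lt hKV) hK)
          (K.fCard_induced_mul_MT_le V' (K.card_verts_induced_lt hKV') hK')
    _ ≤ K.taylorUBval * K.MT (K.verts.card - K.dimP1) := by
        rw [← mul_add]
        exact mul_le_mul_of_nonneg_left (by exact_mod_cast hcoef) K.taylorUBval_nonneg

end SC

open SC in
/-- If `K̂` is covered by induced subcomplexes `K̂[V]` and `K̂[V']` which both satisfy the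
Taylor upper bound, and `|V ∩ V'| ≤ t + d - 1` where
`t = M̃_{n̂-d}(K̂) - (n̂-d) - 1 ≥ 0`, then `K̂` satisfies the Taylor upper bound. -/
theorem taylorUB_union {α : Type*} [DecidableEq α] (Khat : SC α) (V V' : Finset α)
    (d : ℕ) (hd : 1 ≤ d) (hdim : Khat.dimP1 = d)
    (hV : Khat.verts = V ∪ V')
    (hcover : ∀ F ∈ Khat.faces, F ⊆ V ∨ F ⊆ V')
    (hK : TaylorUB (Khat.induced V)) (hK' : TaylorUB (Khat.induced V'))
    (t : ℕ)
    (ht : Khat.MT (Khat.verts.card - d) = (Khat.verts.card - d) + t + 1)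
    (hint : (V ∩ V').card ≤ t + d - 1) :
    TaylorUB Khat := by
  subst hdim
  by_cases hKV : Khat.verts ⊆ V
  · rwa [Khat.induced_eq_self hKV] at hK
  by_cases hKV' : Khat.verts ⊆ V'
  · rwa [Khat.induced_eq_self hKV'] at hK'
  refine Khat.taylorUB_of_faces_cover hcover hKV hKV' hK hK' ?_
  have hs : Khat.verts.card - Khat.dimP1 ≠ 0 := fun hs => by
    rw [hs, MT_zero] at ht
    omega
  have hVV' : (Khat.induced V).verts.card + (Khat.induced V').verts.card =
      Khat.verts.card + (V ∩ V').card := by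
    simp only [induced, hV, union_inter_cancel_left, union_inter_cancel_right]
    exact (card_union_add_card_inter V V').symm
  have hlt := Khat.card_verts_induced_lt hKV
  have hlt' := Khat.card_verts_induced_lt hKV'
  omega
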